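/- arXiv:1108.3139 — 2 statements merged into one kernel-verified Lean document; each statement's English description precedes it below -/
import Mathlib

section
/- Let B1 and B2 be combinatorially perfect I-crystals (with respect to fixed positive integers (a_i^∨)_{i∈I} satisfying a_0^∨ = 1) with lev(B1) ≥ lev(B2). Then an element b1 ⊗ b2 ∈ B1 ⊗ B2 belongs to (B1 ⊗ B2)_min if and only if b1 ∈ (B1)_min and φ_i(b1) ≥ ε_i(b2) for all i ∈ I. Moreover, in this case ε_i(b1 ⊗ b2) = ε_i(b1) and φ_i(b1 ⊗ b2) = φ_i(b1) + φ_i(b2) − ε_i(b2) for all i ∈ I. -/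
/-- An `I`-crystal on a carrier `B`: raising/lowering operators `e i, f i : B → B ⊔ {0}`
(encoded via `Option B`), mutually inverse where defined, with all strings finite. -/
structure Crystal (I : Type*) (B : Type*) where
  e : I → B → Option B
  f : I → B → Option B
  ef : ∀ (i : I) (b b' : B), e i b = some b' → f i b' = some b
  fe : ∀ (i : I) (b b' : B), f i b = some b' → e i b' = some b
  e_bounded : ∀ (i : I) (b : B), ∃ k : ℕ, (fun o => o.bind (e i))^[k] (some b) = none
  f_bounded : ∀ (i : I) (b : B), ∃ k : ℕ, (fun o => o.bind (f i))^[k] (some b) = none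

/-- The largest `k` such that `e^k b ≠ 0`, for a partial map `e : B → B ⊔ {0}`. -/
noncomputable def epsOf {B : Type*} (e : B → Option B) (b : B) : ℕ :=
  sSup {k : ℕ | (fun o => o.bind e)^[k] (some b) ≠ none}

/-- `ε_i(b) = max {k ≥ 0 | e_i^k b ≠ 0}`. -/
noncomputable def Crystal.eps {I B : Type*} (c : Crystal I B) (i : I) (b : B) : ℕ :=
  epsOf (c.e i) b

/-- `φ_i(b) = max {k ≥ 0 | f_i^k b ≠ 0}`. -/
noncomputable def Crystal.phi {I B : Type*} (c : Crystal I B) (i : I) (b : B) : ℕ :=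
  epsOf (c.f i) b

/-- The raising operators of the tensor product crystal `B1 ⊗ B2`. -/
noncomputable def tensorE {I B1 B2 : Type*} (c1 : Crystal I B1) (c2 : Crystal I B2)
    (i : I) (p : B1 × B2) : Option (B1 × B2) :=
  if c2.eps i p.2 ≤ c1.phi i p.1 then (c1.e i p.1).map (fun x => (x, p.2))
  else (c2.e i p.2).map (fun x => (p.1, x))

/-- The lowering operators of the tensor product crystal `B1 ⊗ B2`. -/
noncomputable def tensorF {I B1 B2 : Type*} (c1 : Crystal I B1) (c2 : Crystal I B2)
    (i : I) (p : B1 × B2) : Option (B1 × B2) :=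
  if c2.eps i p.2 < c1.phi i p.1 then (c1.f i p.1).map (fun x => (x, p.2))
  else (c2.f i p.2).map (fun x => (p.1, x))

/-- `⟨ε(b), K⟩ = Σ_i a_i^∨ ε_i(b)`, the level of the weight `ε(b)`. -/
noncomputable def levK {I B : Type*} [Fintype I] (a : I → ℕ) (c : Crystal I B) (b : B) : ℕ :=
  ∑ i, a i * c.eps i b

/-- `lev(B) = min_{b ∈ B} ⟨ε(b), K⟩`. -/
noncomputable def lev {I B : Type*} [Fintype I] (a : I → ℕ) (c : Crystal I B) : ℕ :=
  sInf (Set.range (levK a c))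

/-- A level-zero crystal `B` is combinatorially perfect of level `l` if it is finite and
nonempty, `lev(B) = l`, and `ε` and `φ` restrict to bijections from
`B_min = {b | ⟨ε(b), K⟩ = l}` onto `{λ ∈ ℤ_{≥0}^I | ⟨λ, K⟩ = l}`. -/
structure IsPerfect {I B : Type*} [Fintype I] (a : I → ℕ) (c : Crystal I B) (l : ℕ) : Prop where
  finite : Finite B
  nonempty : Nonempty B
  level_zero : ∀ b : B, (∑ i, a i * c.eps i b) = ∑ i, a i * c.phi i b
  lev_eq : lev a c = l
  eps_bij : Set.BijOn (fun b i => c.eps i b)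
    {b | levK a c b = l} {lam : I → ℕ | ∑ i, a i * lam i = l}
  phi_bij : Set.BijOn (fun b i => c.phi i b)
    {b | levK a c b = l} {lam : I → ℕ | ∑ i, a i * lam i = l}

/-- The level of the tensor product crystal `B1 ⊗ B2`. -/
noncomputable def tensorLev {I B1 B2 : Type*} [Fintype I] (a : I → ℕ)
    (c1 : Crystal I B1) (c2 : Crystal I B2) : ℕ :=
  sInf (Set.range (fun p : B1 × B2 => ∑ i, a i * epsOf (tensorE c1 c2 i) p))

section Aux

variable {B : Type*}

lemma iterBind_none (g : B → Option B) (k : ℕ) :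
    (fun o => o.bind g)^[k] none = none := by
  induction k with
  | zero => rfl
  | succ k ih => rw [Function.iterate_succ_apply]; exact ih

lemma iterBind_succ (g : B → Option B) (b : B) (k : ℕ) :
    (fun o => o.bind g)^[k + 1] (some b) = (fun o => o.bind g)^[k] (g b) := by
  rw [Function.iterate_succ_apply]
  rfl

lemma iterBind_mono (g : B → Option B) {m n : ℕ} (h : m ≤ n) {x : Option B}
    (hx : (fun o => o.bind g)^[m] x = none) : (fun o => o.bind g)^[n] x = none := by
  obtain ⟨d, rfl⟩ := Nat.exists_eq_add_of_le h
  rw [Nat.add_comm, Function.iterate_add_apply, hx, iterBind_none]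

lemma epsOf_eq {g : B → Option B} {b : B} {N : ℕ}
    (h1 : (fun o => o.bind g)^[N] (some b) ≠ none)
    (h2 : (fun o => o.bind g)^[N + 1] (some b) = none) : epsOf g b = N := by
  unfold epsOf
  have hub : ∀ m ∈ {k : ℕ | (fun o => o.bind g)^[k] (some b) ≠ none}, m ≤ N := by
    intro m hm
    by_contra hc
    push_neg at hc
    exact hm (iterBind_mono g hc h2)
  refine le_antisymm (csSup_le ⟨0, by simp⟩ hub) (le_csSup ⟨N, hub⟩ h1)

lemma epsOf_spec {g : B → Option B} {b : B}
    (hb : ∃ k, (fun o => o.bind g)^[k] (some b) = none) :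
    (fun o => o.bind g)^[epsOf g b] (some b) ≠ none ∧
      (fun o => o.bind g)^[epsOf g b + 1] (some b) = none := by
  obtain ⟨k, hk⟩ := hb
  have hub : ∀ m ∈ {k : ℕ | (fun o => o.bind g)^[k] (some b) ≠ none}, m ≤ k := by
    intro m hm
    by_contra hc
    push_neg at hc
    exact hm (iterBind_mono g hc.le hk)
  have hne : {k : ℕ | (fun o => o.bind g)^[k] (some b) ≠ none}.Nonempty := ⟨0, by simp⟩
  have hbdd : BddAbove {k : ℕ | (fun o => o.bind g)^[k] (some b) ≠ none} := ⟨k, hub⟩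
  have hmem := Nat.sSup_mem hne hbdd
  unfold epsOf
  refine ⟨hmem, ?_⟩
  by_contra hc
  have := le_csSup hbdd (show _ ∈ {k : ℕ | (fun o => o.bind g)^[k] (some b) ≠ none} from hc)
  omega

lemma epsOf_none {g : B → Option B} {b : B} (h : g b = none) : epsOf g b = 0 := by
  refine epsOf_eq (by simp) ?_
  rw [iterBind_succ g b 0, h]
  rfl

lemma epsOf_succ {g : B → Option B} {b b' : B} (h : g b = some b')
    (hb' : ∃ k, (fun o => o.bind g)^[k] (some b') = none) :
    epsOf g b = epsOf g b' + 1 := by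
  obtain ⟨h1, h2⟩ := epsOf_spec hb'
  refine epsOf_eq ?_ ?_
  · rw [iterBind_succ, h]; exact h1
  · rw [iterBind_succ, h]; exact h2

end Aux

section CrystalAux

variable {I B : Type*} (c : Crystal I B) {i : I} {b b' : B}

lemma Crystal.eps_succ (h : c.e i b = some b') : c.eps i b = c.eps i b' + 1 :=
  epsOf_succ h (c.e_bounded i b')

lemma Crystal.phi_succ_e (h : c.e i b = some b') : c.phi i b' = c.phi i b + 1 :=
  epsOf_succ (c.ef i b b' h) (c.f_bounded i b)

lemma Crystal.phi_succ_f (h : c.f i b = some b') : c.phi i b = c.phi i b' + 1 :=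
  epsOf_succ h (c.f_bounded i b')

lemma Crystal.eps_succ_f (h : c.f i b = some b') : c.eps i b' = c.eps i b + 1 :=
  epsOf_succ (c.fe i b b' h) (c.e_bounded i b)

lemma Crystal.e_eq_none (h : c.eps i b = 0) : c.e i b = none := by
  cases hx : c.e i b with
  | none => rfl
  | some y => have := c.eps_succ hx; omega

lemma Crystal.f_eq_none (h : c.phi i b = 0) : c.f i b = none := by
  cases hx : c.f i b with
  | none => rfl
  | some y => have := c.phi_succ_f hx; omega

lemma Crystal.e_some_of_eps_ne (h : c.eps i b ≠ 0) : ∃ y, c.e i b = some y := by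
  cases hx : c.e i b with
  | none => exact absurd (epsOf_none hx) h
  | some y => exact ⟨y, rfl⟩

lemma Crystal.f_some_of_phi_ne (h : c.phi i b ≠ 0) : ∃ y, c.f i b = some y := by
  cases hx : c.f i b with
  | none => exact absurd (epsOf_none hx) h
  | some y => exact ⟨y, rfl⟩

end CrystalAux

section TensorAux

variable {I B1 B2 : Type*} (c1 : Crystal I B1) (c2 : Crystal I B2)

lemma tensorE_pair (i : I) (b1 : B1) (b2 : B2) :
    tensorE c1 c2 i (b1, b2) =
      if c2.eps i b2 ≤ c1.phi i b1 then (c1.e i b1).map (fun x => (x, b2))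
      else (c2.e i b2).map (fun x => (b1, x)) := rfl

lemma tensorF_pair (i : I) (b1 : B1) (b2 : B2) :
    tensorF c1 c2 i (b1, b2) =
      if c2.eps i b2 < c1.phi i b1 then (c1.f i b1).map (fun x => (x, b2))
      else (c2.f i b2).map (fun x => (b1, x)) := rfl

lemma tensorE_bound (i : I) : ∀ (n : ℕ) (b1 : B1) (b2 : B2),
    c1.eps i b1 + c2.eps i b2 ≤ n →
    (fun o => o.bind (tensorE c1 c2 i))^[n + 1] (some (b1, b2)) = none := by
  intro n
  induction n with
  | zero =>
    intro b1 b2 h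
    have he1 : c1.e i b1 = none := c1.e_eq_none (by omega)
    have he2 : c2.e i b2 = none := c2.e_eq_none (by omega)
    have ht : tensorE c1 c2 i (b1, b2) = none := by
      rw [tensorE_pair]; split <;> simp [he1, he2]
    rw [iterBind_succ, ht]
    exact iterBind_none _ 0
  | succ n ih =>
    intro b1 b2 h
    rw [iterBind_succ]
    cases ht : tensorE c1 c2 i (b1, b2) with
    | none => exact iterBind_none _ _
    | some p =>
      rw [tensorE_pair] at ht
      by_cases hc : c2.eps i b2 ≤ c1.phi i b1
      · rw [if_pos hc, Option.map_eq_some_iff] at ht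
        obtain ⟨x, hx, rfl⟩ := ht
        have := c1.eps_succ hx
        exact ih x b2 (by omega)
      · rw [if_neg hc, Option.map_eq_some_iff] at ht
        obtain ⟨x, hx, rfl⟩ := ht
        have := c2.eps_succ hx
        exact ih b1 x (by omega)

lemma tensorF_bound (i : I) : ∀ (n : ℕ) (b1 : B1) (b2 : B2),
    c1.phi i b1 + c2.phi i b2 ≤ n →
    (fun o => o.bind (tensorF c1 c2 i))^[n + 1] (some (b1, b2)) = none := by
  intro n
  induction n with
  | zero =>
    intro b1 b2 h
    have hf1 : c1.f i b1 = none := c1.f_eq_none (by omega)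
    have hf2 : c2.f i b2 = none := c2.f_eq_none (by omega)
    have ht : tensorF c1 c2 i (b1, b2) = none := by
      rw [tensorF_pair]; split <;> simp [hf1, hf2]
    rw [iterBind_succ, ht]
    exact iterBind_none _ 0
  | succ n ih =>
    intro b1 b2 h
    rw [iterBind_succ]
    cases ht : tensorF c1 c2 i (b1, b2) with
    | none => exact iterBind_none _ _
    | some p =>
      rw [tensorF_pair] at ht
      by_cases hc : c2.eps i b2 < c1.phi i b1
      · rw [if_pos hc, Option.map_eq_some_iff] at ht
        obtain ⟨x, hx, rfl⟩ := ht
        have := c1.phi_succ_f hx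
        exact ih x b2 (by omega)
      · rw [if_neg hc, Option.map_eq_some_iff] at ht
        obtain ⟨x, hx, rfl⟩ := ht
        have := c2.phi_succ_f hx
        exact ih b1 x (by omega)

lemma tensorE_eps (i : I) : ∀ (n : ℕ) (b1 : B1) (b2 : B2),
    c1.eps i b1 + c2.eps i b2 ≤ n →
    epsOf (tensorE c1 c2 i) (b1, b2) = c1.eps i b1 + (c2.eps i b2 - c1.phi i b1) := by
  intro n
  induction n with
  | zero =>
    intro b1 b2 h
    have he1 : c1.e i b1 = none := c1.e_eq_none (by omega)
    have he2 : c2.e i b2 = none := c2.e_eq_none (by omega)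
    have ht : tensorE c1 c2 i (b1, b2) = none := by
      rw [tensorE_pair]; split <;> simp [he1, he2]
    rw [epsOf_none ht]
    omega
  | succ n ih =>
    intro b1 b2 h
    by_cases hc : c2.eps i b2 ≤ c1.phi i b1
    · cases he : c1.e i b1 with
      | none =>
        have ht : tensorE c1 c2 i (b1, b2) = none := by
          rw [tensorE_pair, if_pos hc, he]; rfl
        have h0 : c1.eps i b1 = 0 := epsOf_none he
        rw [epsOf_none ht]
        omega
      | some b1' =>
        have ht : tensorE c1 c2 i (b1, b2) = some (b1', b2) := by
          rw [tensorE_pair, if_pos hc, he]; rfl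
        have he1 : c1.eps i b1 = c1.eps i b1' + 1 := c1.eps_succ he
        have hp1 : c1.phi i b1' = c1.phi i b1 + 1 := c1.phi_succ_e he
        have hstep := epsOf_succ ht ⟨n + 1, tensorE_bound c1 c2 i n b1' b2 (by omega)⟩
        rw [hstep, ih b1' b2 (by omega)]
        omega
    · push_neg at hc
      obtain ⟨b2', he⟩ := c2.e_some_of_eps_ne (show c2.eps i b2 ≠ 0 by omega)
      have ht : tensorE c1 c2 i (b1, b2) = some (b1, b2') := by
        rw [tensorE_pair, if_neg (not_le.mpr hc), he]; rfl
      have he2 : c2.eps i b2 = c2.eps i b2' + 1 := c2.eps_succ he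
      have hstep := epsOf_succ ht ⟨n + 1, tensorE_bound c1 c2 i n b1 b2' (by omega)⟩
      rw [hstep, ih b1 b2' (by omega)]
      omega

lemma tensorF_phi (i : I) : ∀ (n : ℕ) (b1 : B1) (b2 : B2),
    c1.phi i b1 + c2.phi i b2 ≤ n →
    epsOf (tensorF c1 c2 i) (b1, b2) = c2.phi i b2 + (c1.phi i b1 - c2.eps i b2) := by
  intro n
  induction n with
  | zero =>
    intro b1 b2 h
    have hf2 : c2.f i b2 = none := c2.f_eq_none (by omega)
    have hnc : ¬ (c2.eps i b2 < c1.phi i b1) := by omega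
    have ht : tensorF c1 c2 i (b1, b2) = none := by
      rw [tensorF_pair, if_neg hnc, hf2]; rfl
    rw [epsOf_none ht]
    omega
  | succ n ih =>
    intro b1 b2 h
    by_cases hc : c2.eps i b2 < c1.phi i b1
    · obtain ⟨b1', hf⟩ := c1.f_some_of_phi_ne (show c1.phi i b1 ≠ 0 by omega)
      have ht : tensorF c1 c2 i (b1, b2) = some (b1', b2) := by
        rw [tensorF_pair, if_pos hc, hf]; rfl
      have hp : c1.phi i b1 = c1.phi i b1' + 1 := c1.phi_succ_f hf
      have hstep := epsOf_succ ht ⟨n + 1, tensorF_bound c1 c2 i n b1' b2 (by omega)⟩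
      rw [hstep, ih b1' b2 (by omega)]
      omega
    · cases hf : c2.f i b2 with
      | none =>
        have ht : tensorF c1 c2 i (b1, b2) = none := by
          rw [tensorF_pair, if_neg hc, hf]; rfl
        have h0 : c2.phi i b2 = 0 := epsOf_none hf
        rw [epsOf_none ht]
        omega
      | some b2' =>
        have ht : tensorF c1 c2 i (b1, b2) = some (b1, b2') := by
          rw [tensorF_pair, if_neg hc, hf]; rfl
        have hp : c2.phi i b2 = c2.phi i b2' + 1 := c2.phi_succ_f hf
        have he : c2.eps i b2' = c2.eps i b2 + 1 := c2.eps_succ_f hf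
        have hstep := epsOf_succ ht ⟨n + 1, tensorF_bound c1 c2 i n b1 b2' (by omega)⟩
        rw [hstep, ih b1 b2' (by omega)]
        omega

end TensorAux

/-- for perfect crystals with `lev(B1) ≥ lev(B2)`, `b1 ⊗ b2` is minimal in
`B1 ⊗ B2` iff `b1 ∈ (B1)_min` and `φ_i(b1) ≥ ε_i(b2)` for all `i`; in that case
`ε_i(b1 ⊗ b2) = ε_i(b1)` and `φ_i(b1 ⊗ b2) = φ_i(b1) + φ_i(b2) − ε_i(b2)`. -/
theorem tensor_min_of_left_higher {I B1 B2 : Type*} [Fintype I] (i0 : I) (a : I → ℕ)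
    (ha : ∀ i, 0 < a i) (ha0 : a i0 = 1)
    (c1 : Crystal I B1) (c2 : Crystal I B2) (l1 l2 : ℕ)
    (h1 : IsPerfect a c1 l1) (h2 : IsPerfect a c2 l2) (hle : l2 ≤ l1)
    (b1 : B1) (b2 : B2) :
    ((∑ i, a i * epsOf (tensorE c1 c2 i) (b1, b2)) = tensorLev a c1 c2 ↔
        levK a c1 b1 = lev a c1 ∧ ∀ i, c2.eps i b2 ≤ c1.phi i b1) ∧
      ((∑ i, a i * epsOf (tensorE c1 c2 i) (b1, b2)) = tensorLev a c1 c2 →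
        ∀ i, epsOf (tensorE c1 c2 i) (b1, b2) = c1.eps i b1 ∧
          (epsOf (tensorF c1 c2 i) (b1, b2) : ℤ)
            = (c1.phi i b1 : ℤ) + (c2.phi i b2 : ℤ) - (c2.eps i b2 : ℤ)) := by
  
  classical
  haveI hB1 : Nonempty B1 := h1.nonempty
  haveI hB2 : Nonempty B2 := h2.nonempty
  have key : ∀ (x1 : B1) (x2 : B2),
      (∑ i, a i * epsOf (tensorE c1 c2 i) (x1, x2))
        = levK a c1 x1 + ∑ i, a i * (c2.eps i x2 - c1.phi i x1) := by
    intro x1 x2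
    unfold levK
    rw [← Finset.sum_add_distrib]
    refine Finset.sum_congr rfl fun i _ => ?_
    rw [tensorE_eps c1 c2 i (c1.eps i x1 + c2.eps i x2) x1 x2 le_rfl, Nat.mul_add]
  have hlev1 : ∀ x : B1, l1 ≤ levK a c1 x := by
    intro x
    have h := Nat.sInf_le (Set.mem_range_self (f := levK a c1) x)
    rw [← h1.lev_eq]
    exact h
  have htlev : tensorLev a c1 c2 = l1 := by
    have hge : l1 ≤ tensorLev a c1 c2 := by
      refine le_csInf (Set.range_nonempty _) ?_
      rintro v ⟨p, rfl⟩
      show l1 ≤ ∑ i, a i * epsOf (tensorE c1 c2 i) p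
      have hk : (∑ i, a i * epsOf (tensorE c1 c2 i) p)
          = levK a c1 p.1 + ∑ i, a i * (c2.eps i p.2 - c1.phi i p.1) := key p.1 p.2
      calc l1 ≤ levK a c1 p.1 := hlev1 p.1
        _ ≤ _ := by rw [hk]; exact Nat.le_add_right _ _
    obtain ⟨b2m, hb2m⟩ : ∃ x : B2, levK a c2 x = l2 := by
      have h := Nat.sInf_mem (Set.range_nonempty (levK a c2))
      have h' : l2 ∈ Set.range (levK a c2) := by rw [← h2.lev_eq]; exact h
      exact h'
    set lam : I → ℕ := fun j => c2.eps j b2m + if j = i0 then l1 - l2 else 0 with hlamdef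
    have hlamsum : ∑ j, a j * lam j = l1 := by
      have h1s : ∑ j, a j * lam j
          = (∑ j, a j * c2.eps j b2m) + ∑ j, a j * (if j = i0 then l1 - l2 else 0) := by
        rw [← Finset.sum_add_distrib]
        exact Finset.sum_congr rfl fun j _ => Nat.mul_add _ _ _
      have h2s : (∑ j, a j * (if j = i0 then l1 - l2 else 0)) = a i0 * (l1 - l2) := by
        rw [Finset.sum_congr rfl (fun j _ => by rw [mul_ite, Nat.mul_zero])]
        simp
      have h3s : (∑ j, a j * c2.eps j b2m) = l2 := hb2m
      rw [h1s, h2s, h3s, ha0]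
      omega
    obtain ⟨b1m, hb1m, hphi⟩ :=
      h1.phi_bij.surjOn (show lam ∈ {lam : I → ℕ | ∑ i, a i * lam i = l1} from hlamsum)
    have hphi' : ∀ j, c1.phi j b1m = lam j := fun j => congrFun hphi j
    have hge2 : ∀ j, c2.eps j b2m ≤ c1.phi j b1m := by
      intro j
      rw [hphi' j]
      simp only [hlamdef]
      exact Nat.le_add_right _ _
    have hval : (∑ j, a j * epsOf (tensorE c1 c2 j) (b1m, b2m)) = l1 := by
      rw [key b1m b2m]
      have hz : (∑ j, a j * (c2.eps j b2m - c1.phi j b1m)) = 0 :=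
        Finset.sum_eq_zero fun j _ => by
          have hj := hge2 j
          have h0 : c2.eps j b2m - c1.phi j b1m = 0 := by omega
          rw [h0, Nat.mul_zero]
      rw [hz]
      simpa using hb1m
    have hle' : tensorLev a c1 c2 ≤ l1 := by
      rw [← hval]
      exact Nat.sInf_le ⟨(b1m, b2m), rfl⟩
    omega
  have hiff : (∑ i, a i * epsOf (tensorE c1 c2 i) (b1, b2)) = tensorLev a c1 c2 ↔
      levK a c1 b1 = lev a c1 ∧ ∀ i, c2.eps i b2 ≤ c1.phi i b1 := by
    rw [htlev, h1.lev_eq, key b1 b2]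
    constructor
    · intro h
      have h1b : l1 ≤ levK a c1 b1 := hlev1 b1
      have hE : (∑ i, a i * (c2.eps i b2 - c1.phi i b1)) = 0 := by omega
      refine ⟨by omega, fun i => ?_⟩
      have hzi := (Finset.sum_eq_zero_iff).mp hE i (Finset.mem_univ i)
      have hai := ha i
      have h0 : c2.eps i b2 - c1.phi i b1 = 0 := by
        rcases Nat.mul_eq_zero.mp hzi with hx | hx
        · omega
        · exact hx
      omega
    · rintro ⟨hmin, hge⟩
      have hE : (∑ i, a i * (c2.eps i b2 - c1.phi i b1)) = 0 :=
        Finset.sum_eq_zero fun i _ => by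
          have hi := hge i
          have h0 : c2.eps i b2 - c1.phi i b1 = 0 := by omega
          rw [h0, Nat.mul_zero]
      omega
  refine ⟨hiff, ?_⟩
  intro hmin i
  obtain ⟨-, hge⟩ := hiff.mp hmin
  have hgi := hge i
  have he := tensorE_eps c1 c2 i (c1.eps i b1 + c2.eps i b2) b1 b2 le_rfl
  have hf := tensorF_phi c1 c2 i (c1.phi i b1 + c2.phi i b2) b1 b2 le_rfl
  constructor
  · rw [he]; omega
  · rw [hf]; omega
end

section
/- Let B1, B2 be I-crystals with 0 ∈ I, σ : B1 ⊗ B2 → B2 ⊗ B1 an isomorphism of I-crystals, and H : B1 ⊗ B2 → ℤ a local energy function with respect to σ. Let ℓ1, ℓ2 ∈ ℤ and suppose D_1 : B1 → ℤ and D_2 : B2 → ℤ satisfy: D_j(e_0 b) = D_j(b) − 1 for every b ∈ B_j with ε_0(b) > ℓ_j (j = 1, 2). Define D : B1 ⊗ B2 → ℤ by D(b1 ⊗ b2) = D_1(b1) + D_2(b̃2) + H(b1 ⊗ b2), where σ(b1 ⊗ b2) = b̃2 ⊗ b̃1. Then for every ℓ ≥ max{ℓ1, ℓ2} and every b ∈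 B1 ⊗ B2 with ε_0(b) > ℓ, one has D(e_0 b) = D(b) − 1. -/
/-- `e_i` acts on the first tensor factor of `p = a ⊗ b` iff `φ_i(a) ≥ ε_i(b)`. -/
def actsLeft {I A B : Type*} (cA : Crystal I A) (cB : Crystal I B) (i : I) (p : A × B) : Prop :=
  cB.eps i p.2 ≤ cA.phi i p.1

noncomputable instance {I A B : Type*} (cA : Crystal I A) (cB : Crystal I B) (i : I)
    (p : A × B) : Decidable (actsLeft cA cB i p) :=
  inferInstanceAs (Decidable (cB.eps i p.2 ≤ cA.phi i p.1))

/-- `σ : B1 ⊗ B2 → B2 ⊗ B1` is an isomorphism of `I`-crystals: a bijection commuting with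
all `e_i` and `f_i` (sending `0` to `0`). -/
structure IsCrystalIso {I B1 B2 : Type*} (c1 : Crystal I B1) (c2 : Crystal I B2)
    (σ : B1 × B2 → B2 × B1) : Prop where
  bij : Function.Bijective σ
  comm_e : ∀ (i : I) (p : B1 × B2), Option.map σ (tensorE c1 c2 i p) = tensorE c2 c1 i (σ p)
  comm_f : ∀ (i : I) (p : B1 × B2), Option.map σ (tensorF c1 c2 i p) = tensorF c2 c1 i (σ p)

/-- `H : B1 ⊗ B2 → ℤ` is a local energy function with respect to `σ`: it is unchanged by
`e_i` for `i ≠ 0`, and changes by `+1` (resp. `−1`, resp. `0`) under `e_0` according to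
whether `e_0` acts on the left (resp. right, resp. mixed) factors of `x` and `σ(x)`. -/
structure IsLocalEnergy {I B1 B2 : Type*} (i0 : I) (c1 : Crystal I B1) (c2 : Crystal I B2)
    (σ : B1 × B2 → B2 × B1) (H : B1 × B2 → ℤ) : Prop where
  ne_zero : ∀ (i : I), i ≠ i0 → ∀ (x y : B1 × B2), tensorE c1 c2 i x = some y → H y = H x
  zero_LL : ∀ (x y : B1 × B2), tensorE c1 c2 i0 x = some y →
    actsLeft c1 c2 i0 x → actsLeft c2 c1 i0 (σ x) → H y = H x + 1
  zero_RR : ∀ (x y : B1 × B2), tensorE c1 c2 i0 x = some y →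
    ¬ actsLeft c1 c2 i0 x → ¬ actsLeft c2 c1 i0 (σ x) → H y = H x - 1
  zero_mixed : ∀ (x y : B1 × B2), tensorE c1 c2 i0 x = some y →
    ¬ (actsLeft c1 c2 i0 x ↔ actsLeft c2 c1 i0 (σ x)) → H y = H x

/-- Apply a sequence of operators `e_{j_1}, …, e_{j_ℓ}` (in this order) to `x`. -/
def applyList {I X : Type*} (step : I → X → Option X) (J : List I) (x : X) : Option X :=
  J.foldl (fun o j => o.bind (step j)) (some x)

/-- Along the application of `e_{j_1}, …, e_{j_ℓ}` to `p ∈ A ⊗ B`, count the steps with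
`j_q = i0` that act on the first factor (if `onFirst = true`) resp. on the second factor
(if `onFirst = false`), following the tensor-product rule. -/
noncomputable def zeroCount {I A B : Type*} [DecidableEq I] (cA : Crystal I A)
    (cB : Crystal I B) (i0 : I) (onFirst : Bool) : List I → A × B → ℕ
  | [], _ => 0
  | j :: J, p =>
      (if j = i0 ∧ (actsLeft cA cB j p ↔ onFirst = true) then 1 else 0) +
        (tensorE cA cB j p).elim 0 (zeroCount cA cB i0 onFirst J)

/-!
Write `[P]` for `1` if `P` holds and `0` otherwise. Along `x ↦ e₀ x` the energy changes by
`[e₀ acts on the left of x] + [e₀ acts on the left of σ x] - 1`, whereas `D₁` loses exactly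
`[e₀ acts on the left of x]` and `D₂` loses `[e₀ acts on the left of σ x]`; the three
contributions add up to `-1`. The level condition on `D₁` (resp. `D₂`) is available because
`ε₀(b₁ ⊗ b₂) = ε₀(b₁)` when `e₀` acts on the first factor, and `ε₀` is invariant under `σ`.
-/

section epsOf

variable {B C : Type*}

@[simp]
lemma iterate_bind_none (e : B → Option B) (k : ℕ) : (fun o => o.bind e)^[k] none = none :=
  Function.iterate_fixed rfl k

lemma iterate_bind_eq_none_of_le (e : B → Option B) {x : Option B} {j k : ℕ} (hjk : j ≤ k)
    (hj : (fun o => o.bind e)^[j] x = none) : (fun o => o.bind e)^[k] x = none := by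
  rw [← Nat.sub_add_cancel hjk, Function.iterate_add_apply, hj, iterate_bind_none]

lemma bddAbove_epsOf_set {e : B → Option B} {b : B}
    (hb : ∃ k, (fun o => o.bind e)^[k] (some b) = none) :
    BddAbove {k : ℕ | (fun o => o.bind e)^[k] (some b) ≠ none} := by
  obtain ⟨k, hk⟩ := hb
  exact ⟨k, fun n hn => not_lt.mp fun hkn => hn (iterate_bind_eq_none_of_le e hkn.le hk)⟩

lemma epsOf_le_of_eq_some {e : B → Option B} {b b' : B} (h : e b' = some b)
    (hb' : ∃ k, (fun o => o.bind e)^[k] (some b') = none) : epsOf e b ≤ epsOf e b' := by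
  refine csSup_le_csSup (bddAbove_epsOf_set hb') ⟨0, by simp⟩ fun k hk hk' => hk ?_
  have hsucc : (fun o => o.bind e)^[k + 1] (some b') = (fun o => o.bind e)^[k] (some b) := by
    rw [Function.iterate_succ_apply]
    simp [h]
  rw [← hsucc]
  exact iterate_bind_eq_none_of_le e k.le_succ hk'

lemma epsOf_map_eq {e : B → Option B} {e' : C → Option C} (g : B → C) (P : B → Prop)
    (hg : ∀ b, P b → Option.map g (e b) = e' (g b))
    (hP : ∀ b b', P b → e b = some b' → P b') {b : B} (hb : P b) :
    epsOf e' (g b) = epsOf e b := by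
  have hiter : ∀ k b, P b → (fun o => o.bind e')^[k] (some (g b)) =
      Option.map g ((fun o => o.bind e)^[k] (some b)) := by
    intro k
    induction k with
    | zero => intro _ _; rfl
    | succ k ih =>
      intro b hb
      simp only [Function.iterate_succ_apply, Option.bind_some, ← hg b hb]
      cases hb' : e b with
      | none => simp
      | some b' => exact ih b' (hP b b' hb hb')
  unfold epsOf
  congr 1
  ext k
  simp [hiter k b hb]

end epsOf

lemma Crystal.phi_le_phi_of_e {I B : Type*} (c : Crystal I B) {i : I} {b b' : B}
    (h : c.e i b = some b') : c.phi i b ≤ c.phi i b' :=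
  epsOf_le_of_eq_some (c.ef i b b' h) (c.f_bounded i b')

section tensor

variable {I A B : Type*} (cA : Crystal I A) (cB : Crystal I B) {i : I} {p q : A × B}

lemma tensorE_of_actsLeft (hL : actsLeft cA cB i p) :
    tensorE cA cB i p = (cA.e i p.1).map (fun x => (x, p.2)) :=
  if_pos hL

lemma tensorE_of_not_actsLeft (hL : ¬ actsLeft cA cB i p) :
    tensorE cA cB i p = (cB.e i p.2).map (fun x => (p.1, x)) :=
  if_neg hL

lemma actsLeft_of_tensorE_eq_some (hL : actsLeft cA cB i p) (hq : tensorE cA cB i p = some q) :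
    actsLeft cA cB i q := by
  rw [tensorE_of_actsLeft cA cB hL, Option.map_eq_some_iff] at hq
  obtain ⟨a, ha, rfl⟩ := hq
  exact hL.trans (cA.phi_le_phi_of_e ha)

lemma epsOf_tensorE_of_actsLeft (hL : actsLeft cA cB i p) :
    epsOf (tensorE cA cB i) p = cA.eps i p.1 :=
  (epsOf_map_eq Prod.fst (actsLeft cA cB i)
    (fun p hp => by simp [tensorE_of_actsLeft cA cB hp, Option.map_map, Function.comp_def])
    (fun _ _ => actsLeft_of_tensorE_eq_some cA cB) hL).symm

lemma apply_fst_of_tensorE_eq_some {F : A → ℤ} {m : ℤ}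
    (hF : ∀ a a', m < (cA.eps i a : ℤ) → cA.e i a = some a' → F a' = F a - 1)
    (hp : m < (epsOf (tensorE cA cB i) p : ℤ)) (hq : tensorE cA cB i p = some q) :
    F q.1 = F p.1 - if actsLeft cA cB i p then 1 else 0 := by
  by_cases hL : actsLeft cA cB i p
  · rw [tensorE_of_actsLeft cA cB hL, Option.map_eq_some_iff] at hq
    obtain ⟨a, ha, rfl⟩ := hq
    rw [if_pos hL]
    exact hF p.1 a (epsOf_tensorE_of_actsLeft cA cB hL ▸ hp) ha
  · rw [tensorE_of_not_actsLeft cA cB hL, Option.map_eq_some_iff] at hq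
    obtain ⟨_, _, rfl⟩ := hq
    simp [hL]

end tensor

section iso

variable {I B1 B2 : Type*} {c1 : Crystal I B1} {c2 : Crystal I B2} {σ : B1 × B2 → B2 × B1}

lemma IsCrystalIso.tensorE_eq_some (hσ : IsCrystalIso c1 c2 σ) {i : I} {p q : B1 × B2}
    (h : tensorE c1 c2 i p = some q) : tensorE c2 c1 i (σ p) = some (σ q) := by
  rw [← hσ.comm_e, h, Option.map_some]

lemma IsCrystalIso.epsOf_tensorE (hσ : IsCrystalIso c1 c2 σ) (i : I) (p : B1 × B2) :
    epsOf (tensorE c2 c1 i) (σ p) = epsOf (tensorE c1 c2 i) p :=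
  epsOf_map_eq σ (fun _ => True) (fun p _ => hσ.comm_e i p) (fun _ _ _ _ => trivial) trivial

lemma IsLocalEnergy.eq_of_tensorE_eq_some {i0 : I} {H : B1 × B2 → ℤ}
    (hH : IsLocalEnergy i0 c1 c2 σ H) {x y : B1 × B2} (h : tensorE c1 c2 i0 x = some y) :
    H y = H x + (if actsLeft c1 c2 i0 x then 1 else 0)
      + (if actsLeft c2 c1 i0 (σ x) then 1 else 0) - 1 := by
  by_cases hL : actsLeft c1 c2 i0 x <;> by_cases hLσ : actsLeft c2 c1 i0 (σ x)
  · simp [hL, hLσ, hH.zero_LL x y h hL hLσ]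
  · simp [hL, hLσ, hH.zero_mixed x y h (by simp [hL, hLσ])]
  · simp [hL, hLσ, hH.zero_mixed x y h (by simp [hL, hLσ])]
  · simp [hL, hLσ, hH.zero_RR x y h hL hLσ]

end iso

/-- if `D_j(e_0 b) = D_j(b) − 1` whenever `ε_0(b) > ℓ_j` (`j = 1, 2`) and
`D(b1 ⊗ b2) = D_1(b1) + D_2(b̃2) + H(b1 ⊗ b2)` where `σ(b1 ⊗ b2) = b̃2 ⊗ b̃1`, then for
every `ℓ ≥ max{ℓ1, ℓ2}` and every `b ∈ B1 ⊗ B2` with `ε_0(b) > ℓ`,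
`D(e_0 b) = D(b) − 1`. -/
theorem energy_e_zero {I B1 B2 : Type*} (i0 : I)
    (c1 : Crystal I B1) (c2 : Crystal I B2) (σ : B1 × B2 → B2 × B1)
    (hσ : IsCrystalIso c1 c2 σ) (H : B1 × B2 → ℤ) (hH : IsLocalEnergy i0 c1 c2 σ H)
    (l1 l2 : ℤ) (D1 : B1 → ℤ) (D2 : B2 → ℤ)
    (hD1 : ∀ (b b' : B1), l1 < (c1.eps i0 b : ℤ) → c1.e i0 b = some b' → D1 b' = D1 b - 1)
    (hD2 : ∀ (b b' : B2), l2 < (c2.eps i0 b : ℤ) → c2.e i0 b = some b' → D2 b' = D2 b - 1)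
    (D : B1 × B2 → ℤ) (hD : ∀ p : B1 × B2, D p = D1 p.1 + D2 (σ p).1 + H p)
    (l : ℤ) (hl : max l1 l2 ≤ l)
    (b : B1 × B2) (hb : l < (epsOf (tensorE c1 c2 i0) b : ℤ))
    (b' : B1 × B2) (hb' : tensorE c1 c2 i0 b = some b') :
    D b' = D b - 1 := by
  have hl1 : l1 < (epsOf (tensorE c1 c2 i0) b : ℤ) := (le_max_left l1 l2).trans hl |>.trans_lt hb
  have hl2 : l2 < (epsOf (tensorE c2 c1 i0) (σ b) : ℤ) := by
    rw [hσ.epsOf_tensorE]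
    exact (le_max_right l1 l2).trans hl |>.trans_lt hb
  rw [hD, hD, apply_fst_of_tensorE_eq_some c1 c2 hD1 hl1 hb',
    apply_fst_of_tensorE_eq_some c2 c1 hD2 hl2 (hσ.tensorE_eq_some hb'),
    hH.eq_of_tensorE_eq_some hb']
  ring
end
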